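/- With c(i) = ((q^{mi} - 1) q^r q^{2i-2} a^2 + q^r [m]_q [i]_{q^m} q^{i-1} a) q^{m(i-1)+r}, the double product Π_{i=0}^{n-1} Π_{j=1}^{i} c(j) equals q^{2r·C(n,2) + (m+1)·C(n,3)} a^{C(n,2)} Π_{i=0}^{n-1} Π_{j=1}^{i} [mj]_q (1 - q^{j-1}(1-q) a). -/

import Mathlib

/-!
Each factor of the double product splits as
`c(j) = q^((m+1)(j-1)+2r) · a · [mj]_q (1 - q^(j-1)(1-q)a)`, because
`q^(mj) - 1 = (q-1)[mj]_q` and `[m]_q [j]_{q^m} = [mj]_q`. Collecting the scalar parts, the powers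
of `a` add up to `Σ_{i<n} i = C(n,2)`, and the powers of `q` to
`Σ_{i<n} ((m+1) C(i,2) + 2ri) = (m+1) C(n,3) + 2r C(n,2)` by the hockey-stick identity.
-/

open Finset

/-- The q-integer `[t]_q = 1 + q + ... + q^(t-1)`. -/
def qint {K : Type*} [CommRing K] (q : K) (t : ℕ) : K :=
  ∑ i ∈ Finset.range t, q ^ i

section QInt

variable {K : Type*} [CommRing K] (q : K)

theorem qint_mul_sub_one (t : ℕ) : qint q t * (q - 1) = q ^ t - 1 :=
  geom_sum_mul q t

theorem qint_add (s t : ℕ) : qint q (s + t) = qint q s + q ^ s * qint q t := by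
  simp only [qint, sum_range_add, mul_sum, pow_add]

theorem qint_mul (m j : ℕ) : qint q (m * j) = qint q m * qint (q ^ m) j := by
  induction j with
  | zero => simp [qint]
  | succ j ih =>
    rw [Nat.mul_succ, qint_add, ih]
    simp only [qint, sum_range_succ, ← pow_mul]
    ring

theorem pow_mul_sub_one_mul_add_qint_mul_qint (a : K) (m j : ℕ) :
    (q ^ (m * j) - 1) * q ^ (j - 1) * a + qint q m * qint (q ^ m) j
      = qint q (m * j) * (1 - q ^ (j - 1) * (1 - q) * a) := by
  rw [← qint_mul_sub_one, ← qint_mul]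
  ring

end QInt

theorem hankel_factor_eq {K : Type*} [CommRing K] (q a : K) (m r : ℕ) {j : ℕ} (hj : 1 ≤ j) :
    ((q ^ (m * j) - 1) * q ^ r * q ^ (2 * j - 2) * a ^ 2
        + q ^ r * qint q m * qint (q ^ m) j * q ^ (j - 1) * a) * q ^ (m * (j - 1) + r)
      = q ^ ((m + 1) * (j - 1) + 2 * r) * a *
          (qint q (m * j) * (1 - q ^ (j - 1) * (1 - q) * a)) := by
  obtain ⟨k, rfl⟩ := Nat.exists_eq_add_of_le' hj
  rw [← pow_mul_sub_one_mul_add_qint_mul_qint]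
  simp only [Nat.add_sub_cancel, show 2 * (k + 1) - 2 = 2 * k by omega]
  ring

theorem sum_range_choose_eq_choose_succ (n k : ℕ) :
    ∑ i ∈ range n, i.choose k = n.choose (k + 1) := by
  induction n with
  | zero => simp
  | succ n ih => rw [sum_range_succ, ih, Nat.choose_succ_succ', add_comm]

theorem sum_range_id_eq_choose_two (n : ℕ) : ∑ i ∈ range n, i = n.choose 2 := by
  rw [sum_range_id, Nat.choose_two_right]

theorem sum_Icc_one_sub_one (i : ℕ) : ∑ j ∈ Icc 1 i, (j - 1) = i.choose 2 := by
  rw [← Ico_add_one_right_eq_Icc, sum_Ico_eq_sum_range, ← sum_range_id_eq_choose_two]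
  simp only [Nat.add_sub_cancel, Nat.add_sub_cancel_left]

theorem sum_range_sum_Icc_one_mul_sub_one_add (c d n : ℕ) :
    ∑ i ∈ range n, ∑ j ∈ Icc 1 i, (c * (j - 1) + d) = d * n.choose 2 + c * n.choose 3 := by
  simp only [sum_add_distrib, ← mul_sum, sum_const, Nat.card_Icc, sum_Icc_one_sub_one,
    smul_eq_mul, ← sum_mul, Nat.add_sub_cancel, sum_range_choose_eq_choose_succ]
  rw [sum_range_id_eq_choose_two]
  ring

theorem hankel_product_formula_general {K : Type*} [Field K] (q a : K)
    (m r : ℕ) (n : ℕ) :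
    (∏ i ∈ Finset.range n, ∏ j ∈ Finset.Icc 1 i,
        ((q ^ (m * j) - 1) * q ^ r * q ^ (2 * j - 2) * a ^ 2
          + q ^ r * qint q m * qint (q ^ m) j * q ^ (j - 1) * a) * q ^ (m * (j - 1) + r))
      = q ^ (2 * r * n.choose 2 + (m + 1) * n.choose 3) * a ^ n.choose 2 *
          ∏ i ∈ Finset.range n, ∏ j ∈ Finset.Icc 1 i,
            qint q (m * j) * (1 - q ^ (j - 1) * (1 - q) * a) := by
  rw [prod_congr rfl fun i _ => prod_congr rfl fun j hj =>
    hankel_factor_eq q a m r (mem_Icc.1 hj).1]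
  simp only [prod_mul_distrib, prod_pow_eq_pow_sum, sum_range_sum_Icc_one_mul_sub_one_add,
    prod_const, Nat.card_Icc, Nat.add_sub_cancel]
  rw [prod_pow_eq_pow_sum (range n) (fun i => i) a, sum_range_id_eq_choose_two, mul_assoc]

/-- with
`c(i) = ((q^(mi) - 1) q^r q^(2i-2) a^2 + q^r [m]_q [i]_{q^m} q^(i-1) a) q^(m(i-1)+r)`,
the double product `Π_{i=0}^{n-1} Π_{j=1}^{i} c(j)` equals
`q^(2r·C(n,2) + (m+1)·C(n,3)) a^(C(n,2)) Π_{i=0}^{n-1} Π_{j=1}^{i} [mj]_q (1 - q^(j-1)(1-q)a)`. -/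
theorem hankel_product_formula {K : Type*} [Field K] (q a : K) (hq0 : q ≠ 0) (hq1 : q ≠ 1)
    (m r : ℕ) (hm : 1 ≤ m) (n : ℕ) :
    (∏ i ∈ Finset.range n, ∏ j ∈ Finset.Icc 1 i,
        ((q ^ (m * j) - 1) * q ^ r * q ^ (2 * j - 2) * a ^ 2
          + q ^ r * qint q m * qint (q ^ m) j * q ^ (j - 1) * a) * q ^ (m * (j - 1) + r))
      = q ^ (2 * r * n.choose 2 + (m + 1) * n.choose 3) * a ^ n.choose 2 *
          ∏ i ∈ Finset.range n, ∏ j ∈ Finset.Icc 1 i,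
            qint q (m * j) * (1 - q ^ (j - 1) * (1 - q) * a) :=
  hankel_product_formula_general q a m r n
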